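/- There exists an absolute constant C > 0 such that for every δ with 1 < δ ≤ 2 and every R > 0, Σ_{j ∈ ℤ} ∫₀^{R} ( min(δ^{-j}/t, t/δ^{-j}) )² · max(δ^{-j}, t) · dt/t ≤ C · R / (δ − 1). -/

import Mathlib

/-!
Writing `a = δ ^ (-j)`, the integrand is `min (t / a) (a / t) ^ 2 * max a t / t`, which equals
`t / a` for `t ≤ a` and `(a / t) ^ 2` for `t ≥ a`, so it is at most `min (t / a) (a / t)`.
Exchanging sum and integral (Tonelli), it suffices to bound `∑ⱼ min (t δ ^ j, (t δ ^ j)⁻¹)`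
uniformly in `t`: splitting `ℤ` at the index where `t δ ^ j` crosses `1`, both halves are
geometric series of ratio `δ⁻¹` with first term at most `1`, so the sum is at most
`2 δ / (δ - 1) ≤ 4 / (δ - 1)`. Integrating over `(0, R)` gives the constant `C = 4`.
-/

open MeasureTheory Set

theorem min_sq_mul_max_div_le {a t : ℝ} (ha : 0 < a) (ht : 0 < t) :
    (min (a / t) (t / a)) ^ 2 * max a t / t ≤ min (t / a) (t / a)⁻¹ := by
  rw [inv_div]
  rcases le_total t a with hta | hat
  · have hmin : min (a / t) (t / a) = t / a :=
      min_eq_right ((div_le_div_iff₀ ha ht).2 (by nlinarith))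
    rw [hmin, max_eq_left hta, min_eq_left ((div_le_div_iff₀ ha ht).2 (by nlinarith))]
    exact (by field_simp : (t / a) ^ 2 * a / t = t / a).le
  · have hmin : min (a / t) (t / a) = a / t :=
      min_eq_left ((div_le_div_iff₀ ht ha).2 (by nlinarith))
    rw [hmin, max_eq_right hat, min_eq_right ((div_le_div_iff₀ ht ha).2 (by nlinarith)),
      mul_div_cancel_right₀ _ ht.ne']
    exact pow_le_of_le_one (div_pos ha ht).le (div_le_one_of_le₀ hat ht.le) two_ne_zero

theorem tsum_ofReal_pow_le {q : ℝ} (hq₀ : 0 ≤ q) (hq₁ : q < 1) {f : ℕ → ℝ}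
    (hf : ∀ n, f n ≤ q ^ n) :
    ∑' n, ENNReal.ofReal (f n) ≤ ENNReal.ofReal (1 - q)⁻¹ := by
  calc ∑' n, ENNReal.ofReal (f n) ≤ ∑' n, ENNReal.ofReal (q ^ n) :=
        ENNReal.tsum_le_tsum fun n => ENNReal.ofReal_le_ofReal (hf n)
    _ = ENNReal.ofReal (1 - q)⁻¹ := by
        rw [← ENNReal.ofReal_tsum_of_nonneg (fun n => pow_nonneg hq₀ n)
          (summable_geometric_of_lt_one hq₀ hq₁), tsum_geometric_of_lt_one hq₀ hq₁]

theorem tsum_ofReal_min_mul_zpow_le {r x : ℝ} (hr : 1 < r) (hx : 0 < x) :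
    ∑' j : ℤ, ENNReal.ofReal (min (x * r ^ j) (x * r ^ j)⁻¹) ≤
      ENNReal.ofReal (2 * r / (r - 1)) := by
  have hr₀ : 0 < r := one_pos.trans hr
  obtain ⟨k, hk_le, hk_lt⟩ := exists_mem_Ico_zpow (inv_pos.2 hx) hr
  set F : ℤ → ENNReal := fun j => ENNReal.ofReal (min (x * r ^ j) (x * r ^ j)⁻¹)
  have hupper : ∀ n : ℕ, min (x * r ^ ((n : ℤ) + (k + 1)))
      (x * r ^ ((n : ℤ) + (k + 1)))⁻¹ ≤ r⁻¹ ^ n := by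
    intro n
    refine (min_le_right _ _).trans ?_
    rw [zpow_add₀ hr₀.ne', zpow_natCast, mul_left_comm, mul_inv, inv_pow]
    exact mul_le_of_le_one_right (by positivity)
      (inv_le_one_of_one_le₀ ((inv_lt_iff_one_lt_mul₀' hx).1 hk_lt).le)
  have hlower : ∀ n : ℕ, min (x * r ^ (-((n : ℤ) + 1) + (k + 1)))
      (x * r ^ (-((n : ℤ) + 1) + (k + 1)))⁻¹ ≤ r⁻¹ ^ n := by
    intro n
    refine (min_le_left _ _).trans ?_
    rw [show -((n : ℤ) + 1) + (k + 1) = -n + k by ring, zpow_add₀ hr₀.ne', zpow_neg,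
      zpow_natCast, ← inv_pow, mul_left_comm]
    exact mul_le_of_le_one_right (by positivity)
      ((mul_le_mul_of_nonneg_left hk_le hx.le).trans_eq (mul_inv_cancel₀ hx.ne'))
  calc ∑' j, F j = ∑' j, F (j + (k + 1)) := ((Equiv.addRight (k + 1)).tsum_eq F).symm
    _ = ∑' n : ℕ, F (n + (k + 1)) + ∑' n : ℕ, F (-(n + 1) + (k + 1)) :=
        tsum_of_nat_of_neg_add_one ENNReal.summable ENNReal.summable
    _ ≤ ENNReal.ofReal (1 - r⁻¹)⁻¹ + ENNReal.ofReal (1 - r⁻¹)⁻¹ :=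
        add_le_add (tsum_ofReal_pow_le (by positivity) (inv_lt_one_of_one_lt₀ hr) hupper)
          (tsum_ofReal_pow_le (by positivity) (inv_lt_one_of_one_lt₀ hr) hlower)
    _ = ENNReal.ofReal (2 * r / (r - 1)) := by
        have hr₁ : 0 < 1 - r⁻¹ := sub_pos.2 (inv_lt_one_of_one_lt₀ hr)
        rw [← ENNReal.ofReal_add (by positivity) (by positivity)]
        congr 1
        field_simp [(sub_pos.2 hr).ne']
        ring

theorem tsum_ofReal_min_sq_mul_max_div_le {δ t : ℝ} (hδ : 1 < δ) (ht : 0 < t) :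
    ∑' j : ℤ, ENNReal.ofReal
        ((min (δ ^ (-j) / t) (t / δ ^ (-j))) ^ 2 * max (δ ^ (-j)) t / t) ≤
      ENNReal.ofReal (2 * δ / (δ - 1)) := by
  refine (ENNReal.tsum_le_tsum fun j => ENNReal.ofReal_le_ofReal
    (min_sq_mul_max_div_le (zpow_pos (one_pos.trans hδ) (-j)) ht)).trans ?_
  simpa only [zpow_neg, div_inv_eq_mul] using tsum_ofReal_min_mul_zpow_le hδ ht

theorem stmt_10 :
    ∃ C > (0:ℝ), ∀ δ : ℝ, 1 < δ → δ ≤ 2 → ∀ R > (0:ℝ),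
      ∑' j : ℤ, ∫⁻ t in Ioo (0:ℝ) R,
          ENNReal.ofReal
            ((min (δ ^ (-j) / t) (t / δ ^ (-j))) ^ 2 * max (δ ^ (-j)) t / t)
        ≤ ENNReal.ofReal (C * R / (δ - 1)) := by
  refine ⟨4, four_pos, fun δ hδ hδ₂ R _ => ?_⟩
  rw [← lintegral_tsum fun j => by fun_prop]
  calc ∫⁻ t in Ioo 0 R, ∑' j : ℤ, ENNReal.ofReal
          ((min (δ ^ (-j) / t) (t / δ ^ (-j))) ^ 2 * max (δ ^ (-j)) t / t)
      ≤ ∫⁻ _ in Ioo 0 R, ENNReal.ofReal (2 * δ / (δ - 1)) :=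
        setLIntegral_mono' measurableSet_Ioo fun t ht =>
          tsum_ofReal_min_sq_mul_max_div_le hδ ht.1
    _ = ENNReal.ofReal (2 * δ * R / (δ - 1)) := by
        rw [setLIntegral_const, Real.volume_Ioo, sub_zero,
          ← ENNReal.ofReal_mul (by have := sub_pos.2 hδ; positivity)]
        ring_nf
    _ ≤ ENNReal.ofReal (4 * R / (δ - 1)) := by
        gcongr
        linarith
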